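/- Let X and Y be forests over an alphabet 𝒳 with m = |X|, and let δ̄ = δ₁,…,δ_T be an edit script with δ̄(X) = Y. Define M_δ̄ recursively by: M_ε = {(1,1),…,(m,m)}; if the last edit is a replacement, M is unchanged; if the last edit is a deletion of the node with current pre-order index j, then every pair (i, j′) with j′ < j is kept, every pair (i, j′) with j′ > j becomes (i, j′ − 1), and any pair with second coordinate j is removed; if the last edit is an insertion at current pre-order position j, then every pair (i, j′) with j′ < j is kept and every pair (i, j′) with j′ ≥ j becomes (i, j′ + 1). Then M_δ̄ is a tree mapping between X and Y. -/

import Mathlib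

/-!
Along the script, the current set stays a tree mapping between `X` and the current forest.
A replacement does not change the shape of the forest. Deleting node `j` shifts every later
pre-order index down by one, and a node `k < j` loses exactly one descendant when `j` lies in
its subtree and none otherwise, so the order and ancestor relations among the surviving
nodes are unchanged by the re-indexing. Inserting a node at position `j` is undone by
deleting node `j` of the result, so the same holds for the inverse re-indexing.
-/

namespace TED

/-- A tree over an alphabet `α`: a label together with a (possibly empty) list of children. -/
inductive PTree (α : Type) where
  | node : α → List (PTree α) → PTree α

/-- A forest over `α` is a finite list of trees; `[]` is the empty forest `ε`. -/
abbrev Forest (α : Type) := List (PTree α)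

namespace PTree

/-- The label of (the root of) a tree. -/
def label {α : Type} : PTree α → α
  | node a _ => a

/-- The children of (the root of) a tree. -/
def children {α : Type} : PTree α → List (PTree α)
  | node _ cs => cs

mutual
  /-- The number of nodes of a tree. -/
  def size {α : Type} : PTree α → ℕ
    | node _ cs => 1 + sizeL cs
  /-- The number of nodes of a forest. -/
  def sizeL {α : Type} : List (PTree α) → ℕ
    | [] => 0
    | t :: ts => size t + sizeL ts
end

mutual
  /-- The pre-order list of all subtrees of a tree. -/
  def subtreesT {α : Type} : PTree α → List (PTree α)
    | node a cs => node a cs :: subtreesL cs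
  /-- The pre-order list of all subtrees of a forest. -/
  def subtreesL {α : Type} : List (PTree α) → List (PTree α)
    | [] => []
    | t :: ts => subtreesT t ++ subtreesL ts
end

end PTree

open PTree

/-- The pre-order `π(X)` of a forest: the list of all its subtrees. -/
def preorder {α : Type} (F : Forest α) : List (PTree α) := PTree.subtreesL F

/-- The size `|X|` of a forest: the length of its pre-order. -/
def fsize {α : Type} (F : Forest α) : ℕ := (preorder F).length

/-- The `i`-th subtree `x̄_i` (1-indexed pre-order) of a forest, if it exists. -/
def treeAt {α : Type} (F : Forest α) (i : ℕ) : Option (PTree α) := (preorder F)[i - 1]?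

/-- The label `x_i` of the `i`-th subtree, as an element of `𝒳 ∪ {−}`
(`none` plays the role of the gap symbol `−`). -/
def labelAt {α : Type} (F : Forest α) (i : ℕ) : Option α := (treeAt F i).map PTree.label

/-- The number of nodes of the `i`-th subtree `x̄_i`. -/
def sizeAt {α : Type} (F : Forest α) (i : ℕ) : ℕ := ((treeAt F i).map PTree.size).getD 0

/-- A cost function over `α`: a real-valued function on `(𝒳 ∪ {−}) × (𝒳 ∪ {−})`,
where the gap symbol `−` is modelled by `none`. -/
abbrev Cost (α : Type) := Option α → Option α → ℝ

/-- `c` is non-negative. -/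
def Nonneg {α : Type} (c : Cost α) : Prop := ∀ x y, 0 ≤ c x y
/-- `c` is self-equal. -/
def SelfEq {α : Type} (c : Cost α) : Prop := ∀ x, c x x = 0
/-- `c` is discernible. -/
def Discernible {α : Type} (c : Cost α) : Prop := ∀ x y, x ≠ y → 0 < c x y
/-- `c` is symmetric. -/
def Symm {α : Type} (c : Cost α) : Prop := ∀ x y, c x y = c y x
/-- `c` conforms to the triangular inequality. -/
def Triangle {α : Type} (c : Cost α) : Prop := ∀ x y z, c x z ≤ c x y + c y z

/-- Deletion of the first root: its children are spliced into its place. -/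
def delRoot {α : Type} : Forest α → Forest α
  | [] => []
  | PTree.node _ cs :: ts => cs ++ ts

/-- Replacement of the label of the first root by `y`. -/
def repRoot {α : Type} (y : α) : Forest α → Forest α
  | [] => []
  | PTree.node _ cs :: ts => PTree.node y cs :: ts

/-- Insertion of a new root labeled `y` at root level, adopting the trees
`l` to `r-1` of the forest as its children. -/
def insRoot {α : Type} (y : α) (l r : ℕ) (F : Forest α) : Forest α :=
  if r > F.length + 1 ∨ l > r ∨ l < 1 then F
  else if l = r then F.take (l - 1) ++ [PTree.node y []] ++ F.drop (l - 1)
  else F.take (l - 1) ++ [PTree.node y ((F.drop (l - 1)).take (r - l))] ++ F.drop (r - 1)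

/-- `del_i`: deletion of the node with pre-order index `i`. -/
def applyDel {α : Type} : ℕ → Forest α → Forest α
  | _, [] => []
  | i, PTree.node a cs :: ts =>
    if i < 1 then PTree.node a cs :: ts
    else if i = 1 then delRoot (PTree.node a cs :: ts)
    else if i ≤ size (PTree.node a cs) then PTree.node a (applyDel (i - 1) cs) :: ts
    else PTree.node a cs :: applyDel (i - size (PTree.node a cs)) ts
  termination_by _ F => sizeOf F

/-- `rep_{i,y}`: replacement of the label of the node with pre-order index `i` by `y`. -/
def applyRep {α : Type} (y : α) : ℕ → Forest α → Forest α
  | _, [] => []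
  | i, PTree.node a cs :: ts =>
    if i < 1 then PTree.node a cs :: ts
    else if i = 1 then repRoot y (PTree.node a cs :: ts)
    else if i ≤ size (PTree.node a cs) then PTree.node a (applyRep y (i - 1) cs) :: ts
    else PTree.node a cs :: applyRep y (i - size (PTree.node a cs)) ts
  termination_by _ F => sizeOf F

/-- `ins_{i,y,l,r}`: insertion of a node labeled `y` as a child of the node with
pre-order index `i` (at root level if `i = 0`), adopting that node's children
`l` through `r-1` as its children. -/
def applyIns {α : Type} (y : α) (l r : ℕ) : ℕ → Forest α → Forest α
  | 0, F => insRoot y l r F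
  | _ + 1, [] => []
  | i + 1, PTree.node a cs :: ts =>
    if i + 1 ≤ size (PTree.node a cs) then PTree.node a (applyIns y l r i cs) :: ts
    else PTree.node a cs :: applyIns y l r (i + 1 - size (PTree.node a cs)) ts
  termination_by _ F => sizeOf F

/-- The standard edits: deletions `del_i`, replacements `rep_{i,y}` and
insertions `ins_{i,y,l,r}`. -/
inductive Edit (α : Type) where
  | del (i : ℕ)
  | rep (i : ℕ) (y : α)
  | ins (i : ℕ) (y : α) (l r : ℕ)

/-- Application of a single edit to a forest. -/
def Edit.apply {α : Type} : Edit α → Forest α → Forest α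
  | .del i, F => applyDel i F
  | .rep i y, F => applyRep y i F
  | .ins i y l r, F => applyIns y l r i F

/-- Application of an edit script `δ̄ = δ₁,…,δ_T` to a forest (left to right). -/
def applyScript {α : Type} (δ : List (Edit α)) (F : Forest α) : Forest α :=
  δ.foldl (fun F e => e.apply F) F

/-- `x̄_k` is a (proper) ancestor of `x̄_i`, expressed via 1-indexed pre-order indices:
the descendants of `x̄_k` occupy exactly the pre-order indices `k+1, …, k + |x̄_k| - 1`. -/
def AncestorIdx {α : Type} (F : Forest α) (k i : ℕ) : Prop :=
  k < i ∧ i < k + sizeAt F k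

/-- A tree mapping between two forests: a set `M ⊆ {1,…,|F|} × {1,…,|G|}` such that
for all `(i,j), (i',j') ∈ M` we have `i = i' ↔ j = j'`, `i ≤ i' ↔ j ≤ j'`, and
`x̄_i` is an ancestor of `x̄_{i'}` iff `ȳ_j` is an ancestor of `ȳ_{j'}`. -/
def IsTreeMapping {α : Type} (F G : Forest α) (M : Finset (ℕ × ℕ)) : Prop :=
  (∀ p ∈ M, 1 ≤ p.1 ∧ p.1 ≤ fsize F ∧ 1 ≤ p.2 ∧ p.2 ≤ fsize G) ∧
  (∀ p ∈ M, ∀ q ∈ M,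
    (p.1 = q.1 ↔ p.2 = q.2) ∧
    (p.1 ≤ q.1 ↔ p.2 ≤ q.2) ∧
    (AncestorIdx F p.1 q.1 ↔ AncestorIdx G p.2 q.2))

/-- The cost `c(M, X, Y)` of a tree mapping: the sum of the replacement costs of
the mapped pairs, the deletion costs of the unmapped nodes of `X`, and the
insertion costs of the unmapped nodes of `Y`. -/
noncomputable def mapCost {α : Type} (c : Cost α) (F G : Forest α) (M : Finset (ℕ × ℕ)) : ℝ :=
  (∑ p ∈ M, c (labelAt F p.1) (labelAt G p.2))
  + (∑ i ∈ (Finset.Icc 1 (fsize F)).filter (fun i => ∀ p ∈ M, p.1 ≠ i), c (labelAt F i) none)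
  + (∑ j ∈ (Finset.Icc 1 (fsize G)).filter (fun j => ∀ p ∈ M, p.2 ≠ j), c none (labelAt G j))

/-- A co-optimal tree mapping: a tree mapping of minimum cost. -/
def IsCoOptimal {α : Type} (c : Cost α) (F G : Forest α) (M : Finset (ℕ × ℕ)) : Prop :=
  IsTreeMapping F G M ∧
  ∀ M' : Finset (ℕ × ℕ), IsTreeMapping F G M' → mapCost c F G M ≤ mapCost c F G M'

/-- The pre-order index (in the output forest) of the node inserted by the edit
`ins_{i,y,l,r}` applied to `F`. -/
def insPos {α : Type} (F : Forest α) (i l : ℕ) : ℕ :=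
  if i = 0 then PTree.sizeL (F.take (l - 1)) + 1
  else
    match treeAt F i with
    | some t => i + PTree.sizeL (t.children.take (l - 1)) + 1
    | none => 0

open Classical in
/-- One step of the recursive construction of the mapping corresponding to an edit
script: `F` is the forest to which the edit `e` is applied, and `M` is the mapping
constructed for the preceding edits. Replacements (and ineffective edits) leave the
mapping unchanged; a deletion of the node with current pre-order index `j` removes
the pair with second coordinate `j` and decrements all larger second coordinates;
an insertion at current pre-order position `j` increments all second coordinates `≥ j`. -/
noncomputable def stepMap {α : Type} (F : Forest α) (e : Edit α) (M : Finset (ℕ × ℕ)) :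
    Finset (ℕ × ℕ) :=
  if e.apply F = F then M
  else
    match e with
    | .rep _ _ => M
    | .del j =>
        (M.filter (fun p => p.2 < j)) ∪
          ((M.filter (fun p => j < p.2)).image (fun p => (p.1, p.2 - 1)))
    | .ins i _ l _ =>
        (M.filter (fun p => p.2 < insPos F i l)) ∪
          ((M.filter (fun p => insPos F i l ≤ p.2)).image (fun p => (p.1, p.2 + 1)))

/-- The mapping `M_δ̄` corresponding to an edit script `δ̄` applied to a forest `F`:
start with the identity mapping `{(1,1),…,(|F|,|F|)}` and update it edit by edit. -/
noncomputable def mapOfScript {α : Type} (δ : List (Edit α)) (F : Forest α) : Finset (ℕ × ℕ) :=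
  (δ.foldl (fun st e => (e.apply st.1, stepMap st.1 e st.2))
    (F, (Finset.Icc 1 (fsize F)).image (fun i => (i, i)))).2

section

variable {α : Type}

theorem Forest.induction {motive : Forest α → Prop} (nil : motive [])
    (cons : ∀ (a : α) (cs ts : Forest α), motive cs → motive ts →
      motive (PTree.node a cs :: ts)) :
    ∀ F : Forest α, motive F
  | [] => nil
  | PTree.node a cs :: ts =>
    cons a cs ts (Forest.induction nil cons cs) (Forest.induction nil cons ts)
  termination_by F => sizeOf F

theorem preorder_cons (a : α) (cs ts : Forest α) :
    preorder (PTree.node a cs :: ts) = PTree.node a cs :: (preorder cs ++ preorder ts) := by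
  simp [preorder, subtreesL, subtreesT]

theorem preorder_append (A B : Forest α) : preorder (A ++ B) = preorder A ++ preorder B := by
  induction A with
  | nil => rfl
  | cons t ts ih =>
    cases t
    simp only [List.cons_append, preorder_cons, List.append_assoc] at ih ⊢
    rw [ih]

theorem fsize_nil : fsize ([] : Forest α) = 0 := rfl

theorem fsize_cons (a : α) (cs ts : Forest α) :
    fsize (PTree.node a cs :: ts) = 1 + fsize cs + fsize ts := by
  simp [fsize, preorder_cons]; omega

theorem fsize_append (A B : Forest α) : fsize (A ++ B) = fsize A + fsize B := by
  simp [fsize, preorder_append]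

theorem sizeL_eq_fsize (F : Forest α) : sizeL F = fsize F := by
  induction F using Forest.induction with
  | nil => rfl
  | cons a cs ts ihc iht => rw [fsize_cons, ← ihc, ← iht]; simp [sizeL, size]

theorem size_node (a : α) (cs : Forest α) : size (PTree.node a cs) = 1 + fsize cs := by
  simp [size, sizeL_eq_fsize]

theorem treeAt_cons_one (a : α) (cs ts : Forest α) :
    treeAt (PTree.node a cs :: ts) 1 = some (PTree.node a cs) := by
  simp [treeAt, preorder_cons]

theorem treeAt_cons_of_ge_two (a : α) (cs ts : Forest α) {k : ℕ} (hk : 2 ≤ k) :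
    treeAt (PTree.node a cs :: ts) k = treeAt (cs ++ ts) (k - 1) := by
  obtain ⟨k, rfl⟩ := Nat.exists_eq_add_of_le' hk
  simp [treeAt, preorder_cons, preorder_append]

theorem treeAt_append_of_le {A : Forest α} (B : Forest α) {k : ℕ} (hk1 : 1 ≤ k)
    (hk : k ≤ fsize A) : treeAt (A ++ B) k = treeAt A k := by
  unfold treeAt fsize at *
  rw [preorder_append, List.getElem?_append_left (by omega)]

theorem treeAt_append_of_lt {A : Forest α} (B : Forest α) {k : ℕ} (hk : fsize A < k) :
    treeAt (A ++ B) k = treeAt B (k - fsize A) := by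
  unfold treeAt fsize at *
  rw [preorder_append, List.getElem?_append_right (by omega)]
  congr 1; omega

theorem sizeAt_cons_one (a : α) (cs ts : Forest α) :
    sizeAt (PTree.node a cs :: ts) 1 = 1 + fsize cs := by
  simp [sizeAt, treeAt_cons_one, size_node]

theorem sizeAt_cons_of_ge_two (a : α) (cs ts : Forest α) {k : ℕ} (hk : 2 ≤ k) :
    sizeAt (PTree.node a cs :: ts) k = sizeAt (cs ++ ts) (k - 1) := by
  simp [sizeAt, treeAt_cons_of_ge_two a cs ts hk]

theorem sizeAt_append_of_le {A : Forest α} (B : Forest α) {k : ℕ} (hk1 : 1 ≤ k)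
    (hk : k ≤ fsize A) : sizeAt (A ++ B) k = sizeAt A k := by
  simp [sizeAt, treeAt_append_of_le B hk1 hk]

theorem sizeAt_append_of_lt {A : Forest α} (B : Forest α) {k : ℕ} (hk : fsize A < k) :
    sizeAt (A ++ B) k = sizeAt B (k - fsize A) := by
  simp [sizeAt, treeAt_append_of_lt B hk]

theorem exists_treeAt_eq_some {F : Forest α} {k : ℕ} (hk1 : 1 ≤ k) (hk : k ≤ fsize F) :
    ∃ t, treeAt F k = some t :=
  ⟨_, List.getElem?_eq_getElem (by unfold fsize at hk; omega)⟩

theorem sizeAt_pos {F : Forest α} {k : ℕ} (hk1 : 1 ≤ k) (hk : k ≤ fsize F) :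
    1 ≤ sizeAt F k := by
  obtain ⟨⟨a, cs⟩, ht⟩ := exists_treeAt_eq_some hk1 hk
  simp [sizeAt, ht, size_node]

theorem add_sizeAt_le (F : Forest α) :
    ∀ k, 1 ≤ k → k ≤ fsize F → k + sizeAt F k ≤ fsize F + 1 := by
  induction F using Forest.induction with
  | nil => intro k _ hk; rw [fsize_nil] at hk; omega
  | cons a cs ts ihc iht =>
    intro k hk1 hk
    rw [fsize_cons] at hk ⊢
    rcases Nat.lt_or_ge k 2 with hk2 | hk2
    · obtain rfl : k = 1 := by omega
      rw [sizeAt_cons_one]; omega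
    rw [sizeAt_cons_of_ge_two a cs ts hk2]
    rcases le_or_gt (k - 1) (fsize cs) with hkc | hkc
    · rw [sizeAt_append_of_le ts (by omega) hkc]
      have := ihc (k - 1) (by omega) hkc
      omega
    · rw [sizeAt_append_of_lt ts hkc]
      have := iht (k - 1 - fsize cs) (by omega) (by omega)
      omega

theorem applyDel_cons_one (a : α) (cs ts : Forest α) :
    applyDel 1 (PTree.node a cs :: ts) = cs ++ ts := by
  simp [applyDel, delRoot]

theorem applyDel_cons_of_le (a : α) (cs ts : Forest α) {j : ℕ} (hj2 : 2 ≤ j)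
    (hj : j ≤ 1 + fsize cs) :
    applyDel j (PTree.node a cs :: ts) = PTree.node a (applyDel (j - 1) cs) :: ts := by
  rw [applyDel, if_neg (by omega), if_neg (by omega), if_pos (by rw [size_node]; omega)]

theorem applyDel_cons_of_lt (a : α) (cs ts : Forest α) {j : ℕ} (hj : 1 + fsize cs < j) :
    applyDel j (PTree.node a cs :: ts) =
      PTree.node a cs :: applyDel (j - (1 + fsize cs)) ts := by
  rw [applyDel, if_neg (by omega), if_neg (by omega), if_neg (by rw [size_node]; omega),
    size_node]

theorem mem_Icc_of_applyDel_ne {F : Forest α} {j : ℕ} (h : applyDel j F ≠ F) :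
    j ∈ Finset.Icc 1 (fsize F) := by
  induction F using Forest.induction generalizing j with
  | nil => simp [applyDel] at h
  | cons a cs ts _ iht =>
    rw [Finset.mem_Icc, fsize_cons]
    by_contra hj
    rcases Nat.lt_or_ge j 1 with hj0 | hj1
    · exact h (by rw [applyDel, if_pos hj0])
    · have := iht fun hts => h (by rw [applyDel_cons_of_lt a cs ts (by omega), hts])
      rw [Finset.mem_Icc] at this
      omega

theorem fsize_applyDel (F : Forest α) :
    ∀ j, 1 ≤ j → j ≤ fsize F → fsize (applyDel j F) + 1 = fsize F := by
  induction F using Forest.induction with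
  | nil => intro j _ hj; rw [fsize_nil] at hj; omega
  | cons a cs ts ihc iht =>
    intro j hj1 hj
    rw [fsize_cons] at hj ⊢
    rcases Nat.lt_or_ge j 2 with hj2 | hj2
    · obtain rfl : j = 1 := by omega
      rw [applyDel_cons_one, fsize_append]; omega
    rcases le_or_gt j (1 + fsize cs) with hjc | hjc
    · rw [applyDel_cons_of_le a cs ts hj2 hjc, fsize_cons]
      have := ihc (j - 1) (by omega) (by omega)
      omega
    · rw [applyDel_cons_of_lt a cs ts hjc, fsize_cons]
      have := iht (j - (1 + fsize cs)) (by omega) (by omega)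
      omega

theorem sizeAt_applyDel_of_lt (F : Forest α) : ∀ j k, 1 ≤ k → k < j → j ≤ fsize F →
    sizeAt (applyDel j F) k = if j < k + sizeAt F k then sizeAt F k - 1 else sizeAt F k := by
  induction F using Forest.induction with
  | nil => intro j k _ _ hj; rw [fsize_nil] at hj; omega
  | cons a cs ts ihc iht =>
    intro j k hk1 hkj hj
    rw [fsize_cons] at hj
    rcases le_or_gt j (1 + fsize cs) with hjc | hjc
    · have hcs := fsize_applyDel cs (j - 1) (by omega) (by omega)
      rw [applyDel_cons_of_le a cs ts (by omega) hjc]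
      rcases Nat.lt_or_ge k 2 with hk2 | hk2
      · obtain rfl : k = 1 := by omega
        rw [sizeAt_cons_one, sizeAt_cons_one, if_pos (by omega)]
        omega
      rw [sizeAt_cons_of_ge_two _ _ _ hk2, sizeAt_cons_of_ge_two _ _ _ hk2,
        sizeAt_append_of_le _ (by omega) (by omega), sizeAt_append_of_le _ (by omega) (by omega),
        ihc (j - 1) (k - 1) (by omega) (by omega) (by omega)]
      split_ifs <;> omega
    · rw [applyDel_cons_of_lt a cs ts hjc]
      rcases Nat.lt_or_ge k 2 with hk2 | hk2
      · obtain rfl : k = 1 := by omega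
        rw [sizeAt_cons_one, sizeAt_cons_one, if_neg (by omega)]
      rw [sizeAt_cons_of_ge_two _ _ _ hk2, sizeAt_cons_of_ge_two _ _ _ hk2]
      rcases le_or_gt (k - 1) (fsize cs) with hkc | hkc
      · have := add_sizeAt_le cs (k - 1) (by omega) hkc
        rw [sizeAt_append_of_le _ (by omega) hkc, sizeAt_append_of_le _ (by omega) hkc,
          if_neg (by omega)]
      · rw [sizeAt_append_of_lt _ hkc, sizeAt_append_of_lt _ hkc,
          iht (j - (1 + fsize cs)) (k - 1 - fsize cs) (by omega) (by omega) (by omega)]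
        split_ifs <;> omega

theorem sizeAt_applyDel_of_gt (F : Forest α) : ∀ j k, 1 ≤ j → j < k → k ≤ fsize F →
    sizeAt (applyDel j F) (k - 1) = sizeAt F k := by
  induction F using Forest.induction with
  | nil => intro j k _ _ hk; rw [fsize_nil] at hk; omega
  | cons a cs ts ihc iht =>
    intro j k hj1 hjk hk
    rw [fsize_cons] at hk
    rw [sizeAt_cons_of_ge_two a cs ts (by omega)]
    rcases Nat.lt_or_ge j 2 with hj2 | hj2
    · obtain rfl : j = 1 := by omega
      rw [applyDel_cons_one]
    rcases le_or_gt j (1 + fsize cs) with hjc | hjc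
    · have hcs := fsize_applyDel cs (j - 1) (by omega) (by omega)
      rw [applyDel_cons_of_le a cs ts hj2 hjc, sizeAt_cons_of_ge_two _ _ _ (by omega)]
      rcases le_or_gt (k - 1) (fsize cs) with hkc | hkc
      · rw [sizeAt_append_of_le _ (by omega) (by omega), sizeAt_append_of_le _ (by omega) hkc,
          ihc (j - 1) (k - 1) (by omega) (by omega) hkc]
      · rw [sizeAt_append_of_lt _ (by omega), sizeAt_append_of_lt _ hkc]
        congr 1; omega
    · rw [applyDel_cons_of_lt a cs ts hjc, sizeAt_cons_of_ge_two _ _ _ (by omega),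
        sizeAt_append_of_lt _ (by omega), sizeAt_append_of_lt _ (by omega),
        show k - 1 - 1 - fsize cs = k - (1 + fsize cs) - 1 by omega,
        iht (j - (1 + fsize cs)) (k - (1 + fsize cs)) (by omega) (by omega) (by omega)]
      congr 1; omega

/-- The pre-order index of node `k ≠ j` after node `j` is deleted. -/
def shiftDown (j k : ℕ) : ℕ := if k < j then k else k - 1

/-- The pre-order index of node `k` after a node is inserted at position `j`. -/
def shiftUp (j k : ℕ) : ℕ := if k < j then k else k + 1

theorem shiftDown_shiftUp (j k : ℕ) : shiftDown j (shiftUp j k) = k := by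
  unfold shiftDown shiftUp; split_ifs <;> omega

theorem ancestorIdx_applyDel {F : Forest α} {j a b : ℕ} (hj1 : 1 ≤ j) (hj : j ≤ fsize F)
    (ha1 : 1 ≤ a) (ha : a ≤ fsize F) (haj : a ≠ j) (hbj : b ≠ j) :
    AncestorIdx (applyDel j F) (shiftDown j a) (shiftDown j b) ↔ AncestorIdx F a b := by
  have hpos := sizeAt_pos ha1 ha
  unfold AncestorIdx shiftDown
  rcases Nat.lt_or_gt_of_ne haj with haj | haj
  · rw [if_pos haj, sizeAt_applyDel_of_lt F j a ha1 haj hj]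
    split_ifs <;> omega
  · rw [if_neg (by omega), sizeAt_applyDel_of_gt F j a hj1 haj ha]
    split_ifs <;> omega

theorem map_size_preorder_applyRep (y : α) (F : Forest α) :
    ∀ j, (preorder (applyRep y j F)).map size = (preorder F).map size := by
  induction F using Forest.induction with
  | nil => intro j; rw [applyRep]
  | cons a cs ts ihc iht =>
    intro j
    have hcs : fsize (applyRep y (j - 1) cs) = fsize cs := by
      rw [fsize, ← List.length_map size, ihc, List.length_map, fsize]
    rw [applyRep]
    split_ifs <;>
      simp only [repRoot, preorder_cons, List.map_cons, List.map_append, size_node, ihc, iht, hcs]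

theorem fsize_applyRep (y : α) (j : ℕ) (F : Forest α) : fsize (applyRep y j F) = fsize F := by
  rw [fsize, ← List.length_map size, map_size_preorder_applyRep, List.length_map, fsize]

theorem sizeAt_applyRep (y : α) (j : ℕ) (F : Forest α) (k : ℕ) :
    sizeAt (applyRep y j F) k = sizeAt F k := by
  have h := congrArg (·[k - 1]?) (map_size_preorder_applyRep y F j)
  simp only [List.getElem?_map] at h
  simp only [sizeAt, treeAt, h]

theorem applyDel_append_node (y : α) (cs B : Forest α) :
    ∀ A : Forest α, applyDel (fsize A + 1) (A ++ PTree.node y cs :: B) = A ++ (cs ++ B)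
  | [] => applyDel_cons_one y cs B
  | PTree.node a cs₀ :: A => by
    rw [List.cons_append, applyDel_cons_of_lt a cs₀ _ (by rw [fsize_cons]; omega), fsize_cons,
      show 1 + fsize cs₀ + fsize A + 1 - (1 + fsize cs₀) = fsize A + 1 by omega,
      applyDel_append_node y cs B A, List.cons_append]

theorem applyDel_insRoot (y : α) (l r : ℕ) (F : Forest α) (h : insRoot y l r F ≠ F) :
    applyDel (insPos F 0 l) (insRoot y l r F) = F := by
  rw [insPos, if_pos rfl, sizeL_eq_fsize]
  unfold insRoot at h ⊢
  split_ifs at h ⊢ with hlr hl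
  · exact absurd rfl h
  · rw [List.append_assoc, List.singleton_append, applyDel_append_node, List.nil_append,
      List.take_append_drop]
  · rw [List.append_assoc, List.singleton_append, applyDel_append_node,
      show r - 1 = l - 1 + (r - l) by omega, ← List.drop_drop, List.take_append_drop,
      List.take_append_drop]

theorem applyIns_zero (y : α) (l r : ℕ) (F : Forest α) :
    applyIns y l r 0 F = insRoot y l r F := by
  rw [applyIns]

theorem applyIns_cons_of_le (y : α) (l r : ℕ) (a : α) (cs ts : Forest α) {i : ℕ}
    (hi1 : 1 ≤ i) (hi : i ≤ 1 + fsize cs) :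
    applyIns y l r i (PTree.node a cs :: ts) = PTree.node a (applyIns y l r (i - 1) cs) :: ts := by
  obtain ⟨i, rfl⟩ := Nat.exists_eq_add_of_le' hi1
  rw [applyIns, if_pos (by rw [size_node]; omega), Nat.add_sub_cancel]

theorem applyIns_cons_of_lt (y : α) (l r : ℕ) (a : α) (cs ts : Forest α) {i : ℕ}
    (hi : 1 + fsize cs < i) :
    applyIns y l r i (PTree.node a cs :: ts) =
      PTree.node a cs :: applyIns y l r (i - (1 + fsize cs)) ts := by
  obtain ⟨i, rfl⟩ := Nat.exists_eq_add_of_le' (show 1 ≤ i by omega)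
  rw [applyIns, if_neg (by rw [size_node]; omega), size_node]

theorem le_fsize_of_applyIns_ne {y : α} {l r i : ℕ} {F : Forest α}
    (h : applyIns y l r i F ≠ F) : i ≤ fsize F := by
  induction F using Forest.induction generalizing i with
  | nil =>
    obtain _ | i := i
    · exact Nat.zero_le _
    · exact absurd (by rw [applyIns]) h
  | cons a cs ts _ iht =>
    rw [fsize_cons]
    by_contra hi
    have := iht fun hts => h (by rw [applyIns_cons_of_lt y l r a cs ts (by omega), hts])
    omega

theorem insPos_of_treeAt_eq_some {F : Forest α} {i : ℕ} (hi : 1 ≤ i) {t : PTree α}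
    (ht : treeAt F i = some t) (l : ℕ) :
    insPos F i l = i + fsize (t.children.take (l - 1)) + 1 := by
  rw [insPos, if_neg (by omega), ht]
  simp only [sizeL_eq_fsize]

theorem insPos_cons_of_le (a : α) (cs ts : Forest α) {i : ℕ} (hi1 : 1 ≤ i)
    (hi : i ≤ 1 + fsize cs) (l : ℕ) :
    insPos (PTree.node a cs :: ts) i l = insPos cs (i - 1) l + 1 := by
  rcases Nat.lt_or_ge i 2 with hi2 | hi2
  · obtain rfl : i = 1 := by omega
    rw [insPos_of_treeAt_eq_some le_rfl (treeAt_cons_one a cs ts), insPos, if_pos rfl,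
      sizeL_eq_fsize, PTree.children]
    omega
  · obtain ⟨t, ht⟩ := exists_treeAt_eq_some (F := cs) (k := i - 1) (by omega) (by omega)
    have ht' : treeAt (PTree.node a cs :: ts) i = some t := by
      rw [treeAt_cons_of_ge_two a cs ts hi2, treeAt_append_of_le ts (by omega) (by omega), ht]
    rw [insPos_of_treeAt_eq_some hi1 ht', insPos_of_treeAt_eq_some (by omega) ht]
    omega

theorem insPos_cons_of_lt (a : α) (cs ts : Forest α) {i : ℕ} (hi1 : 1 + fsize cs < i)
    (hi : i ≤ 1 + fsize cs + fsize ts) (l : ℕ) :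
    insPos (PTree.node a cs :: ts) i l = insPos ts (i - (1 + fsize cs)) l + (1 + fsize cs) := by
  obtain ⟨t, ht⟩ := exists_treeAt_eq_some (F := ts) (k := i - (1 + fsize cs)) (by omega)
    (by omega)
  have ht' : treeAt (PTree.node a cs :: ts) i = some t := by
    rw [treeAt_cons_of_ge_two a cs ts (by omega), treeAt_append_of_lt ts (by omega),
      show i - 1 - fsize cs = i - (1 + fsize cs) by omega, ht]
  rw [insPos_of_treeAt_eq_some (by omega) ht', insPos_of_treeAt_eq_some (by omega) ht]
  omega

theorem applyDel_applyIns (y : α) (l r : ℕ) (F : Forest α) :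
    ∀ i, applyIns y l r i F ≠ F → applyDel (insPos F i l) (applyIns y l r i F) = F := by
  induction F using Forest.induction with
  | nil =>
    rintro (_ | i) h
    · rw [applyIns_zero] at h ⊢; exact applyDel_insRoot y l r _ h
    · exact absurd (by rw [applyIns]) h
  | cons a cs ts ihc iht =>
    rintro (_ | i) h
    · rw [applyIns_zero] at h ⊢; exact applyDel_insRoot y l r _ h
    have hi := le_fsize_of_applyIns_ne h
    rw [fsize_cons] at hi
    rcases le_or_gt (i + 1) (1 + fsize cs) with hic | hic
    · rw [applyIns_cons_of_le y l r a cs ts (by omega) hic, Nat.add_sub_cancel] at h ⊢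
      have hcs : applyIns y l r i cs ≠ cs := fun hcs => h (by rw [hcs])
      have hinv := ihc i hcs
      have hp := Finset.mem_Icc.mp (mem_Icc_of_applyDel_ne (hinv.trans_ne hcs.symm))
      rw [insPos_cons_of_le a cs ts (by omega) hic, Nat.add_sub_cancel,
        applyDel_cons_of_le a _ ts (by omega) (by omega), Nat.add_sub_cancel, hinv]
    · rw [applyIns_cons_of_lt y l r a cs ts hic] at h ⊢
      have hts : applyIns y l r (i + 1 - (1 + fsize cs)) ts ≠ ts := fun hts => h (by rw [hts])
      have hinv := iht _ hts
      have hp := Finset.mem_Icc.mp (mem_Icc_of_applyDel_ne (hinv.trans_ne hts.symm))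
      rw [insPos_cons_of_lt a cs ts hic (by omega),
        applyDel_cons_of_lt a cs _ (by omega), Nat.add_sub_cancel, hinv]

structure IsNodeEmbedding (H H' : Forest α) (D : Set ℕ) (f : ℕ → ℕ) : Prop where
  mem_Icc : ∀ k ∈ D, 1 ≤ f k ∧ f k ≤ fsize H'
  le_iff : ∀ a ∈ D, ∀ b ∈ D, f a ≤ f b ↔ a ≤ b
  ancestorIdx_iff : ∀ a ∈ D, ∀ b ∈ D, AncestorIdx H' (f a) (f b) ↔ AncestorIdx H a b

theorem IsNodeEmbedding.eq_iff {H H' : Forest α} {D : Set ℕ} {f : ℕ → ℕ}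
    (hf : IsNodeEmbedding H H' D f) {a b : ℕ} (ha : a ∈ D) (hb : b ∈ D) :
    f a = f b ↔ a = b := by
  rw [le_antisymm_iff, le_antisymm_iff, hf.le_iff a ha b hb, hf.le_iff b hb a ha]

theorem IsNodeEmbedding.of_leftInverse {H H' : Forest α} {D E : Set ℕ} {f g : ℕ → ℕ}
    (hf : IsNodeEmbedding H' H D f) (hgD : ∀ k ∈ E, g k ∈ D) (hfg : ∀ k ∈ E, f (g k) = k)
    (hg : ∀ k ∈ E, 1 ≤ g k ∧ g k ≤ fsize H') : IsNodeEmbedding H H' E g where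
  mem_Icc := hg
  le_iff a ha b hb := by
    rw [← hf.le_iff _ (hgD a ha) _ (hgD b hb), hfg a ha, hfg b hb]
  ancestorIdx_iff a ha b hb := by
    rw [← hf.ancestorIdx_iff _ (hgD a ha) _ (hgD b hb), hfg a ha, hfg b hb]

theorem isNodeEmbedding_applyRep (y : α) (j : ℕ) (H : Forest α) :
    IsNodeEmbedding H (applyRep y j H) (Set.Icc 1 (fsize H)) id where
  mem_Icc k hk := by rwa [fsize_applyRep]
  le_iff _ _ _ _ := Iff.rfl
  ancestorIdx_iff a _ b _ := by simp only [AncestorIdx, id, sizeAt_applyRep]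

theorem isNodeEmbedding_applyDel {H : Forest α} {j : ℕ} (hj : applyDel j H ≠ H) :
    IsNodeEmbedding H (applyDel j H) (Set.Icc 1 (fsize H) \ {j}) (shiftDown j) := by
  obtain ⟨hj1, hjH⟩ := Finset.mem_Icc.mp (mem_Icc_of_applyDel_ne hj)
  have hsize := fsize_applyDel H j hj1 hjH
  refine ⟨?_, ?_, ?_⟩ <;>
    simp only [Set.mem_sdiff, Set.mem_Icc, Set.mem_singleton_iff, and_imp]
  · intro k hk1 hk hkj; unfold shiftDown; split_ifs <;> omega
  · intro a _ _ haj b _ _ hbj; unfold shiftDown; split_ifs <;> omega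
  · intro a ha1 ha haj b _ _ hbj; exact ancestorIdx_applyDel hj1 hjH ha1 ha haj hbj

theorem isNodeEmbedding_applyIns {y : α} {l r i : ℕ} {H : Forest α}
    (hi : applyIns y l r i H ≠ H) :
    IsNodeEmbedding H (applyIns y l r i H) (Set.Icc 1 (fsize H)) (shiftUp (insPos H i l)) := by
  have hinv := applyDel_applyIns y l r H i hi
  have hdel : applyDel (insPos H i l) (applyIns y l r i H) ≠ applyIns y l r i H :=
    hinv.trans_ne (Ne.symm hi)
  obtain ⟨hp1, hp⟩ := Finset.mem_Icc.mp (mem_Icc_of_applyDel_ne hdel)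
  have hsize := fsize_applyDel _ _ hp1 hp
  rw [hinv] at hsize
  have hemb := isNodeEmbedding_applyDel hdel
  rw [hinv] at hemb
  refine hemb.of_leftInverse ?_ (fun k _ => shiftDown_shiftUp _ k) ?_ <;>
    simp only [Set.mem_sdiff, Set.mem_Icc, Set.mem_singleton_iff, and_imp] <;>
    intro k hk1 hk <;> unfold shiftUp <;> split_ifs <;> omega

theorem IsTreeMapping.mono {F H : Forest α} {M M' : Finset (ℕ × ℕ)} (hM : IsTreeMapping F H M)
    (h : M' ⊆ M) : IsTreeMapping F H M' :=
  ⟨fun p hp => hM.1 p (h hp), fun p hp q hq => hM.2 p (h hp) q (h hq)⟩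

theorem IsTreeMapping.image_snd {F H H' : Forest α} {M : Finset (ℕ × ℕ)} {D : Set ℕ}
    {f : ℕ → ℕ} (hM : IsTreeMapping F H M) (hf : IsNodeEmbedding H H' D f)
    (hMD : ∀ p ∈ M, p.2 ∈ D) : IsTreeMapping F H' (M.image fun p => (p.1, f p.2)) := by
  refine ⟨?_, ?_⟩ <;> simp only [Finset.forall_mem_image]
  · intro p hp
    exact ⟨(hM.1 p hp).1, (hM.1 p hp).2.1, hf.mem_Icc _ (hMD p hp)⟩
  · intro p hp q hq
    obtain ⟨heq, hle, hanc⟩ := hM.2 p hp q hq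
    rw [hf.eq_iff (hMD p hp) (hMD q hq), hf.le_iff _ (hMD p hp) _ (hMD q hq),
      hf.ancestorIdx_iff _ (hMD p hp) _ (hMD q hq)]
    exact ⟨heq, hle, hanc⟩

theorem isTreeMapping_diag (F : Forest α) :
    IsTreeMapping F F ((Finset.Icc 1 (fsize F)).image fun i => (i, i)) := by
  refine ⟨?_, ?_⟩ <;> simp only [Finset.forall_mem_image, Finset.mem_Icc]
  · intro i hi; exact ⟨hi.1, hi.2, hi.1, hi.2⟩
  · simp

theorem isTreeMapping_stepMap {F H : Forest α} {M : Finset (ℕ × ℕ)} (e : Edit α)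
    (hM : IsTreeMapping F H M) : IsTreeMapping F (e.apply H) (stepMap H e M) := by
  have hMH : ∀ p ∈ M, p.2 ∈ Set.Icc 1 (fsize H) := fun p hp => (hM.1 p hp).2.2
  unfold stepMap
  split_ifs with he
  · rwa [he]
  cases e <;> dsimp only [Edit.apply] at he ⊢
  case rep j y => simpa using hM.image_snd (isNodeEmbedding_applyRep y j H) hMH
  case del j =>
    refine ((hM.mono (M.filter_subset (·.2 ≠ j))).image_snd (isNodeEmbedding_applyDel he)
      ?_).mono ?_
    · simp only [Finset.mem_filter, Set.mem_sdiff, Set.mem_singleton_iff]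
      exact fun p hp => ⟨hMH p hp.1, hp.2⟩
    · intro x hx
      simp only [Finset.mem_union, Finset.mem_filter, Finset.mem_image, shiftDown] at hx ⊢
      grind
  case ins i y l r =>
    convert hM.image_snd (isNodeEmbedding_applyIns he) hMH using 1
    ext x
    simp only [Finset.mem_union, Finset.mem_filter, Finset.mem_image, shiftUp]
    grind

theorem isTreeMapping_foldl_stepMap {F H : Forest α} {M : Finset (ℕ × ℕ)}
    (δ : List (Edit α)) (hM : IsTreeMapping F H M) :
    IsTreeMapping F (applyScript δ H)
      (δ.foldl (fun st e => (e.apply st.1, stepMap st.1 e st.2)) (H, M)).2 := by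
  induction δ generalizing H M with
  | nil => exact hM
  | cons e δ ih => exact ih (isTreeMapping_stepMap e hM)

end

/-- For every edit script `δ̄` with `δ̄(X) = Y`, the recursively
constructed set `M_δ̄` is a tree mapping between `X` and `Y`. -/
theorem script_to_mapping {α : Type} (F G : Forest α) (δ : List (Edit α))
    (h : applyScript δ F = G) :
    IsTreeMapping F G (mapOfScript δ F) := by
  subst h
  exact isTreeMapping_foldl_stepMap δ (isTreeMapping_diag F)

end TED
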